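/- If two G-structures ω_G(M) and ω̄_Ḡ(M) on M induce the same reduced subgroupoid of the 1-jets groupoid (i.e., the sets of quotients {L_y · L_x⁻¹} coincide), then there exists Z₀ ∈ GL(n,ℝ) with ω_G(M)·Z₀ = ω̄_Ḡ(M), and hence Ḡ = Z₀⁻¹ · G · Z₀ up to conjugation. Abstract fibrewise version: let G act freely and transitively fibrewise; if two subsets P, P̄ of a principal GL(n,ℝ)-bundle satisfy {p·q⁻¹ : p,q} equal (as maps between fibres) then P̄ = P·Z₀ for some fixed Z₀ ∈ GL(n,ℝ). -/
import Mathlib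


/-- If two `G`-structures induce the same reduced subgroupoid of the 1-jets
groupoid then they differ by a fixed right translation `Z₀` (and hence the
structure groups are conjugate).  Abstract fibrewise version: fibres of the
frame bundle are modelled inside the group `H` (`= GL(n,ℝ)` after a choice of
frame), the fibre `P x` of a `G`-structure being a left coset of the subgroup
`G ≤ H`; `𝒢(P)` assigns to `x, y` the set of quotients `q·p⁻¹` with `p ∈ P x`,
`q ∈ P y`.  Then `𝒢(P) = 𝒢(P̄)` if and only if there is a fixed `Z₀ ∈ H` with
`P̄ = P·Z₀` (and then `Ḡ = Z₀⁻¹·G·Z₀`). -/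
theorem same_jet_groupoid_iff_right_translate
    {M H : Type*} [Group H] [Nonempty M] (G G' : Subgroup H)
    (P P' : M → Set H)
    (hP : ∀ x, ∃ p : H, P x = (fun g => p * g) '' (G : Set H))
    (hP' : ∀ x, ∃ p : H, P' x = (fun g => p * g) '' (G' : Set H)) :
    (∀ x y : M,
        {h : H | ∃ p ∈ P x, ∃ q ∈ P y, h = q * p⁻¹} =
          {h : H | ∃ p ∈ P' x, ∃ q ∈ P' y, h = q * p⁻¹}) ↔
    ∃ Z₀ : H, (∀ x, P' x = (fun p => p * Z₀) '' P x) ∧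
      (G' : Set H) = (fun g => Z₀⁻¹ * g * Z₀) '' (G : Set H) := by
  constructor
  · intro hEq
    obtain ⟨x₀⟩ := ‹Nonempty M›
    obtain ⟨p, hp⟩ := hP x₀
    obtain ⟨p', hp'⟩ := hP' x₀
    have hpmem : p ∈ P x₀ := by rw [hp]; exact ⟨1, G.one_mem, mul_one p⟩
    have hp'mem : p' ∈ P' x₀ := by rw [hp']; exact ⟨1, G'.one_mem, mul_one p'⟩
    have key : ∀ x, P' x = (fun q => q * (p⁻¹ * p')) '' P x := by
      intro x
      obtain ⟨r, hr⟩ := hP x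
      obtain ⟨r', hr'⟩ := hP' x
      ext h
      constructor
      · intro hh
        have h1 : h * p'⁻¹ ∈
            {h : H | ∃ a ∈ P x₀, ∃ b ∈ P x, h = b * a⁻¹} := by
          rw [hEq x₀ x]
          exact ⟨p', hp'mem, h, hh, rfl⟩
        obtain ⟨a, ha, b, hb, heq⟩ := h1
        rw [hp] at ha; obtain ⟨g, hg, rfl⟩ := ha
        rw [hr] at hb; obtain ⟨g₁, hg₁, rfl⟩ := hb
        refine ⟨r * (g₁ * g⁻¹), ?_, ?_⟩
        · rw [hr]; exact ⟨g₁ * g⁻¹, mul_mem hg₁ (inv_mem hg), rfl⟩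
        · rw [mul_inv_eq_iff_eq_mul] at heq
          simp only []
          rw [heq]; group
      · rintro ⟨q, hq, rfl⟩
        have h1 : q * p⁻¹ ∈
            {h : H | ∃ a ∈ P' x₀, ∃ b ∈ P' x, h = b * a⁻¹} := by
          rw [← hEq x₀ x]
          exact ⟨p, hpmem, q, hq, rfl⟩
        obtain ⟨a, ha, b, hb, heq⟩ := h1
        rw [hp'] at ha; obtain ⟨g', hg', rfl⟩ := ha
        rw [hr'] at hb; obtain ⟨g₁', hg₁', rfl⟩ := hb
        rw [mul_inv_eq_iff_eq_mul] at heq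
        have : q * (p⁻¹ * p') = r' * (g₁' * g'⁻¹) := by
          rw [heq]; group
        show q * (p⁻¹ * p') ∈ P' x
        rw [this, hr']
        exact ⟨g₁' * g'⁻¹, mul_mem hg₁' (inv_mem hg'), rfl⟩
    refine ⟨p⁻¹ * p', key, ?_⟩
    ext g'
    constructor
    · intro hg'
      have : p' * g' ∈ P' x₀ := by rw [hp']; exact ⟨g', hg', rfl⟩
      rw [key x₀, hp] at this
      obtain ⟨a, ⟨g, hg, rfl⟩, haeq⟩ := this
      refine ⟨g, hg, ?_⟩
      simp only [] at haeq ⊢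
      have : g' = p'⁻¹ * (p * g * (p⁻¹ * p')) := by
        rw [haeq]; group
      rw [this]; group
    · rintro ⟨g, hg, rfl⟩
      have : p * g * (p⁻¹ * p') ∈ P' x₀ := by
        rw [key x₀]
        exact ⟨p * g, by rw [hp]; exact ⟨g, hg, rfl⟩, rfl⟩
      rw [hp'] at this
      obtain ⟨g₂, hg₂, heq⟩ := this
      simp only [] at heq
      have : (p⁻¹ * p')⁻¹ * g * (p⁻¹ * p') = g₂ := by
        rw [← mul_left_cancel_iff (a := p')]
        rw [heq]; group
      show (p⁻¹ * p')⁻¹ * g * (p⁻¹ * p') ∈ (G' : Set H)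
      rw [this]; exact hg₂
  · rintro ⟨Z₀, hA, _⟩ x y
    ext h
    constructor
    · rintro ⟨a, ha, b, hb, rfl⟩
      refine ⟨a * Z₀, ?_, b * Z₀, ?_, by group⟩
      · rw [hA x]; exact ⟨a, ha, rfl⟩
      · rw [hA y]; exact ⟨b, hb, rfl⟩
    · rintro ⟨a, ha, b, hb, rfl⟩
      rw [hA x] at ha; obtain ⟨a₀, ha₀, rfl⟩ := ha
      rw [hA y] at hb; obtain ⟨b₀, hb₀, rfl⟩ := hb
      exact ⟨a₀, ha₀, b₀, hb₀, by group⟩
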